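/- Let C ⊆ ℤ₂^d with 0 ∉ C, and let σ = Σ_{c∈C} c. If σ ≠ 0, then the cubelike graph G(C) has perfect state transfer from each vertex u to u + σ at time π/2 (under Laplacian dynamics). If σ = 0, then e^{i(π/2)L} is a unimodular multiple of the identity (G(C) is periodic with period π/2). -/

import Mathlib

open Matrix

/-- The time-`π/2` unitary generated by a real Hamiltonian `L`. -/
noncomputable def evolHalfPi {m : Type*} [Fintype m] [DecidableEq m]
    (L : Matrix m m ℝ) : Matrix m m ℂ :=
  NormedSpace.exp ((Complex.I * ((Real.pi / 2 : ℝ) : ℂ)) • L.map (fun x => (x : ℂ)))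

/-!
Write `τ c` for the permutation matrix of the translation `x ↦ x + c`. Since `0 ∉ C`, the
Laplacian of the cubelike graph is `L = ∑_{c ∈ C} (1 - τ c)`, a sum of commuting terms. Each
`τ c` is an involution, so `(1 - τ c) / 2` is an idempotent and `exp (i π/2 (1 - τ c)) = τ c`.
Hence `exp (i π/2 L) = ∏_{c ∈ C} τ c = τ σ`: the evolution at time `π/2` is the translation by
`σ`, which is the identity when `σ = 0` and sends `u` to `u + σ` otherwise.
-/

open NormedSpace

def IsIdempotentElem.prodRingHom {R 𝔸 : Type*} [CommRing R] [Ring 𝔸] [Algebra R 𝔸]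
    {e : 𝔸} (he : IsIdempotentElem e) : R × R →+* 𝔸 where
  toFun p := p.1 • e + p.2 • (1 - e)
  map_one' := by simp
  map_mul' p q := by
    have h1 : e * (1 - e) = 0 := by rw [mul_sub, mul_one, he.eq, sub_self]
    have h2 : (1 - e) * e = 0 := by rw [sub_mul, one_mul, he.eq, sub_self]
    simp only [Prod.fst_mul, Prod.snd_mul, add_mul, mul_add, smul_mul_smul, he.eq, h1, h2,
      he.one_sub.eq, smul_zero, add_zero, zero_add, mul_smul]
  map_zero' := by simp
  map_add' p q := by simp only [Prod.fst_add, Prod.snd_add, add_smul]; abel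

section BanachAlgebra

variable {𝔸 : Type*} [NormedRing 𝔸] [NormedAlgebra ℂ 𝔸] [Algebra ℚ 𝔸]

theorem IsIdempotentElem.exp_smul {e : 𝔸} (he : IsIdempotentElem e) (z : ℂ) :
    exp (z • e) = Complex.exp z • e + (1 - e) := by
  have hexp : exp ((z, 0) : ℂ × ℂ) = (Complex.exp z, 1) := by
    ext <;> simp [Complex.exp_eq_exp_ℂ]
  have hcont : Continuous (he.prodRingHom (R := ℂ)) := by
    show Continuous fun p : ℂ × ℂ => p.1 • e + p.2 • (1 - e)
    fun_prop
  simpa [IsIdempotentElem.prodRingHom, hexp] using (map_exp _ hcont ((z, 0) : ℂ × ℂ)).symm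

theorem exp_I_mul_pi_div_two_smul_one_sub_of_mul_self_eq_one {P : 𝔸} (hP : P * P = 1) :
    exp ((Complex.I * ((Real.pi / 2 : ℝ) : ℂ)) • (1 - P)) = P := by
  set e : 𝔸 := (2⁻¹ : ℂ) • (1 - P) with he_def
  have hsq : (1 - P) * (1 - P) = (2 : ℂ) • (1 - P) := by
    simp only [sub_mul, mul_sub, one_mul, mul_one, hP, two_smul]; abel
  have he : IsIdempotentElem e := by
    rw [IsIdempotentElem, he_def, smul_mul_smul_comm, hsq, smul_smul]; norm_num
  have harg : (Complex.I * ((Real.pi / 2 : ℝ) : ℂ)) • (1 - P) = (Complex.I * Real.pi) • e := by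
    rw [he_def, smul_smul]; push_cast; ring_nf
  rw [harg, he.exp_smul, mul_comm, Complex.exp_pi_mul_I, he_def]
  module

end BanachAlgebra

section Translations

variable {V : Type*} [AddCommGroup V] [Fintype V] [DecidableEq V]

theorem permMatrix_addRight_mul_permMatrix_addRight {R : Type*} [NonAssocSemiring R]
    (a b : V) :
    (Equiv.addRight a).permMatrix R * (Equiv.addRight b).permMatrix R =
      (Equiv.addRight (a + b)).permMatrix R := by
  rw [← permMatrix_mul, Equiv.addRight_add]

theorem commute_permMatrix_addRight {R : Type*} [NonAssocSemiring R] (a b : V) :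
    Commute ((Equiv.addRight a).permMatrix R) ((Equiv.addRight b).permMatrix R) := by
  rw [Commute, SemiconjBy, permMatrix_addRight_mul_permMatrix_addRight,
    permMatrix_addRight_mul_permMatrix_addRight, add_comm]

theorem exp_I_mul_pi_div_two_smul_sum_one_sub_permMatrix_addRight (C : Finset V)
    (hC : ∀ c ∈ C, c + c = 0) :
    exp ((Complex.I * ((Real.pi / 2 : ℝ) : ℂ)) •
        ∑ c ∈ C, (1 - (Equiv.addRight c).permMatrix ℂ)) =
      (Equiv.addRight (∑ c ∈ C, c)).permMatrix ℂ := by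
  induction C using Finset.induction_on with
  | empty => simp
  | insert a C ha ih =>
    have hinv : (Equiv.addRight a).permMatrix ℂ * (Equiv.addRight a).permMatrix ℂ = 1 := by
      rw [permMatrix_addRight_mul_permMatrix_addRight, hC a (Finset.mem_insert_self a C)]; simp
    have hexp : exp ((Complex.I * ((Real.pi / 2 : ℝ) : ℂ)) •
        (1 - (Equiv.addRight a).permMatrix ℂ)) = (Equiv.addRight a).permMatrix ℂ := by
      open scoped Matrix.Norms.Operator in
      exact exp_I_mul_pi_div_two_smul_one_sub_of_mul_self_eq_one hinv
    have hcomm : Commute (1 - (Equiv.addRight a).permMatrix ℂ)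
        (∑ c ∈ C, (1 - (Equiv.addRight c).permMatrix ℂ)) :=
      Commute.sum_right _ _ _ fun c _ => (Commute.one_right _).sub_right
        ((Commute.one_left _).sub_left (commute_permMatrix_addRight a c))
    rw [Finset.sum_insert ha, smul_add,
      Matrix.exp_add_of_commute _ _ ((hcomm.smul_left _).smul_right _), hexp,
      ih fun c hc => hC c (Finset.mem_insert_of_mem hc), Finset.sum_insert ha,
      permMatrix_addRight_mul_permMatrix_addRight]

end Translations

section Cubelike

variable {V : Type*} [AddCommGroup V] [Module (ZMod 2) V] [DecidableEq V]

def cubelikeLaplacian (C : Finset V) : Matrix V V ℝ :=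
  Matrix.of fun u v => if u = v then (C.card : ℝ) else if u + v ∈ C then -1 else 0

theorem cubelikeLaplacian_map_ofReal [Fintype V] {C : Finset V} (h0 : (0 : V) ∉ C) :
    (cubelikeLaplacian C).map (fun x => (x : ℂ)) =
      ∑ c ∈ C, (1 - (Equiv.addRight c).permMatrix ℂ) := by
  ext u v
  have hcount : {c ∈ C | u + c = v}.card = if u + v ∈ C then 1 else 0 := by
    have hsolve (c : V) : u + c = v ↔ c = u + v := by
      rw [← eq_sub_iff_add_eq', ZModModule.sub_eq_add, add_comm]
    simp_rw [hsolve, Finset.filter_eq']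
    split_ifs <;> simp
  simp only [cubelikeLaplacian, map_apply, of_apply, Matrix.sum_apply, Matrix.sub_apply,
    Matrix.one_apply, PEquiv.toMatrix_apply, Equiv.toPEquiv_apply, Equiv.coe_addRight,
    Option.mem_def, Option.some.injEq, Finset.sum_sub_distrib, Finset.sum_ite_irrel,
    Finset.sum_const, nsmul_eq_mul, mul_one, Finset.sum_boole, hcount]
  by_cases huv : u = v
  · subst huv
    simp [ZModModule.add_self, h0]
  · split_ifs <;> simp

theorem evolHalfPi_cubelikeLaplacian [Fintype V] {C : Finset V} (h0 : (0 : V) ∉ C) :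
    evolHalfPi (cubelikeLaplacian C) = (Equiv.addRight (∑ c ∈ C, c)).permMatrix ℂ := by
  rw [evolHalfPi, cubelikeLaplacian_map_ofReal h0,
    exp_I_mul_pi_div_two_smul_sum_one_sub_permMatrix_addRight C fun c _ => ZModModule.add_self c]

end Cubelike

theorem cubelike_pst (d : ℕ) (C : Finset (Fin d → ZMod 2))
    (h0 : (0 : Fin d → ZMod 2) ∉ C)
    (L : Matrix (Fin d → ZMod 2) (Fin d → ZMod 2) ℝ)
    (hL : L = Matrix.of fun u v =>
      if u = v then (C.card : ℝ) else if u + v ∈ C then -1 else 0)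
    (σ : Fin d → ZMod 2) (hσ : σ = ∑ c ∈ C, c) :
    (σ ≠ 0 → ∀ u, ‖(evolHalfPi L) u (u + σ)‖ = 1) ∧
    (σ = 0 → ∃ z : ℂ, ‖z‖ = 1 ∧ evolHalfPi L = z • 1) := by
  have hU : evolHalfPi L = (Equiv.addRight σ).permMatrix ℂ := by
    rw [hL, hσ]; exact evolHalfPi_cubelikeLaplacian h0
  refine ⟨fun _ u => by simp [hU], fun hσ0 => ⟨1, norm_one, by simp [hU, hσ0]⟩⟩
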